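/- arXiv:1812.07084 — 2 statements merged into one kernel-verified Lean document; each statement's English description precedes it below -/
import Mathlib

section
/- Let D₁ be the (T·(n+m))-dimensional block matrix encoding one-step dynamics correction for linear dynamics x_{t+1} = A x_t + B u_t (fixing x₁ and all controls, and replacing each state x̃_{t+1} with A x_t + B u_t one step at a time). Then for any vector ξ (a concatenated state-control trajectory), the vector D₁^{T-1} ξ satisfies the dynamics: its state components x_t satisfy x_{t+1} = A x_t + B u_t for all t = 1, …, T-1. -/
/-- A stacked trajectory of horizon `T+1`: states `x₁,…,x_{T+1} ∈ ℝⁿ` and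
controls `u₁,…,u_T ∈ ℝᵐ`. -/
def Traj (n m T : ℕ) := (Fin (T + 1) → Fin n → ℝ) × (Fin T → Fin m → ℝ)

/-- The one-step dynamics consistency map `D₁` for linear dynamics
`x_{t+1} = A x_t + B u_t`: it fixes `x₁` and all controls, and replaces each
state block `x_{t+1}` by `A x_t + B u_t`. -/
def D1 {n m T : ℕ} (A : Matrix (Fin n) (Fin n) ℝ) (B : Matrix (Fin n) (Fin m) ℝ)
    (ξ : Traj n m T) : Traj n m T :=
  (Fin.cases (ξ.1 0) (fun t => A.mulVec (ξ.1 t.castSucc) + B.mulVec (ξ.2 t)), ξ.2)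

/-! Each application of `D₁` makes one more dynamics constraint hold: a state whose defining
constraint already holds is left unchanged, so after `k` steps the first `k` constraints hold. -/

open Matrix

def Traj.DynamicsHoldAt {n m T : ℕ} (ξ : Traj n m T) (A : Matrix (Fin n) (Fin n) ℝ)
    (B : Matrix (Fin n) (Fin m) ℝ) (t : Fin T) : Prop :=
  ξ.1 t.succ = A *ᵥ ξ.1 t.castSucc + B *ᵥ ξ.2 t

section

variable {n m T : ℕ} (A : Matrix (Fin n) (Fin n) ℝ) (B : Matrix (Fin n) (Fin m) ℝ)

theorem D1_snd (ξ : Traj n m T) : (D1 A B ξ).2 = ξ.2 := rfl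

theorem D1_fst_succ (ξ : Traj n m T) (t : Fin T) :
    (D1 A B ξ).1 t.succ = A *ᵥ ξ.1 t.castSucc + B *ᵥ ξ.2 t := rfl

theorem D1_fst_eq_of_dynamicsHoldAt {ξ : Traj n m T} {i : Fin (T + 1)}
    (h : ∀ s : Fin T, s.succ = i → ξ.DynamicsHoldAt A B s) : (D1 A B ξ).1 i = ξ.1 i := by
  cases i using Fin.cases with
  | zero => rfl
  | succ s => exact (h s rfl).symm

theorem dynamicsHoldAt_D1_iterate (ξ : Traj n m T) :
    ∀ k, ∀ t : Fin T, (t : ℕ) < k → ((D1 A B)^[k] ξ).DynamicsHoldAt A B t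
  | 0, _, ht => absurd ht (Nat.not_lt_zero _)
  | k + 1, t, ht => by
    have hprev : ∀ s : Fin T, s.succ = t.castSucc → ((D1 A B)^[k] ξ).DynamicsHoldAt A B s :=
      fun s hs => dynamicsHoldAt_D1_iterate ξ k s (by
        have hval := congrArg Fin.val hs
        simp only [Fin.val_succ, Fin.val_castSucc] at hval
        omega)
    rw [Traj.DynamicsHoldAt, Function.iterate_succ_apply', D1_fst_succ, D1_snd,
      D1_fst_eq_of_dynamicsHoldAt A B hprev]

end

/-- Applying `D₁` once per time step (i.e. `T` times for `T+1` states) to any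
stacked trajectory vector yields a dynamically feasible trajectory. -/
theorem D1_iterate_feasible {n m T : ℕ}
    (A : Matrix (Fin n) (Fin n) ℝ) (B : Matrix (Fin n) (Fin m) ℝ)
    (ξ : Traj n m T) :
    ∀ t : Fin T, ((D1 A B)^[T] ξ).1 t.succ =
      A.mulVec (((D1 A B)^[T] ξ).1 t.castSucc) + B.mulVec (((D1 A B)^[T] ξ).2 t) :=
  fun t => dynamicsHoldAt_D1_iterate A B ξ T t t.isLt
end

section
/- Moreover, the matrix D₁ satisfies D₁^T = D₁^{T-1}, i.e., D₁ is eventually idempotent-like: applying it T-1 times reaches the fixed-point set, and D₁^{T-1} is a projection onto the eigenspace of D₁ with eigenvalue 1 in the sense that D₁ (D₁^{T-1} ξ) = D₁^{T-1} ξ for all ξ. -/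
namespace D1

variable {n m T : ℕ} (A : Matrix (Fin n) (Fin n) ℝ) (B : Matrix (Fin n) (Fin m) ℝ)

lemma fst_zero (ξ : Traj n m T) : (D1 A B ξ).1 0 = ξ.1 0 := rfl

lemma fst_succ (ξ : Traj n m T) (t : Fin T) :
    (D1 A B ξ).1 t.succ = A.mulVec (ξ.1 t.castSucc) + B.mulVec (ξ.2 t) := rfl

lemma snd_eq (ξ : Traj n m T) : (D1 A B ξ).2 = ξ.2 := rfl

lemma iterate_snd (k : ℕ) (ξ : Traj n m T) : ((D1 A B)^[k] ξ).2 = ξ.2 := by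
  induction k with
  | zero => rfl
  | succ k ih => rw [Function.iterate_succ_apply', snd_eq, ih]

lemma fst_eq_of_fst_eq_of_le {ξ η : Traj n m T} {j : ℕ} (hu : ξ.2 = η.2)
    (hx : ∀ i : Fin (T + 1), (i : ℕ) ≤ j → ξ.1 i = η.1 i) :
    ∀ i : Fin (T + 1), (i : ℕ) ≤ j + 1 → (D1 A B ξ).1 i = (D1 A B η).1 i := by
  intro i hi
  cases i using Fin.cases with
  | zero => exact hx 0 (Nat.zero_le j)
  | succ t =>
    rw [fst_succ, fst_succ, hx t.castSucc (by simpa using hi), hu]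

lemma iterate_succ_fst_of_le (ξ : Traj n m T) (k : ℕ) :
    ∀ i : Fin (T + 1), (i : ℕ) ≤ k → ((D1 A B)^[k + 1] ξ).1 i = ((D1 A B)^[k] ξ).1 i := by
  induction k with
  | zero =>
    intro i hi
    obtain rfl : i = 0 := Fin.ext (Nat.le_zero.mp hi)
    exact fst_zero A B ξ
  | succ k ih =>
    have hu : ((D1 A B)^[k + 1] ξ).2 = ((D1 A B)^[k] ξ).2 := by rw [iterate_snd, iterate_snd]
    simpa only [← Function.iterate_succ_apply'] using fst_eq_of_fst_eq_of_le A B hu ih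

end D1

/-- `D₁` applied one more time after `T` iterations changes nothing: `D₁^{T+1} = D₁^T`
on every vector, i.e. `D₁^T` projects onto the eigenvalue-1 eigenspace of `D₁`. -/
theorem D1_iterate_projection {n m T : ℕ}
    (A : Matrix (Fin n) (Fin n) ℝ) (B : Matrix (Fin n) (Fin m) ℝ)
    (ξ : Traj n m T) :
    D1 A B ((D1 A B)^[T] ξ) = (D1 A B)^[T] ξ ∧
      (D1 A B)^[T + 1] ξ = (D1 A B)^[T] ξ := by
  have stable : (D1 A B)^[T + 1] ξ = (D1 A B)^[T] ξ :=
    Prod.ext (funext fun i => D1.iterate_succ_fst_of_le A B ξ T i (Nat.le_of_lt_succ i.isLt))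
      (by rw [D1.iterate_snd, D1.iterate_snd])
  exact ⟨(Function.iterate_succ_apply' (D1 A B) T ξ).symm.trans stable, stable⟩
end
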